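/- arXiv:1907.10874 — 2 statements merged into one kernel-verified Lean document; each statement's English description precedes it below -/
import Mathlib

section
/- Let φ be a labeling of walks, and let N(n+1, S) be the number of walks (v_0,...,v_n) on a finite directed graph G such that Σ_{i=0}^{n-1} ⌈n · log₂ deg(v_i)⌉ = S. Then N(n+1, S) ≤ 2^{log₂|G| + S/n}. -/
open Finset

private lemma walk_sum_eq {V : Type*} [Fintype V] (A : Matrix V V ℕ)
    (hA : ∀ u v, A u v = 0 ∨ A u v = 1)
    (deg : V → ℕ) (hdeg : ∀ v, deg v = ∑ u : V, A v u) (hpos : ∀ v, 1 ≤ deg v) :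
    ∀ m : ℕ, ∑ f : Fin (m + 1) → V,
      (if ∀ i : Fin m, A (f i.castSucc) (f i.succ) = 1
        then ∏ i : Fin m, ((deg (f i.castSucc) : ℝ))⁻¹ else 0)
      = (Fintype.card V : ℝ) := by
  classical
  intro m
  induction m with
  | zero =>
      simp [Fintype.card_fun]
  | succ m ih =>
      have hsum : ∀ w : V, ∑ v : V, (if A w v = 1 then (1 : ℝ) else 0) = (deg w : ℝ) := by
        intro w
        have : ∀ v : V, (if A w v = 1 then (1 : ℝ) else 0) = ((A w v : ℕ) : ℝ) := by
          intro v
          rcases hA w v with h | h <;> simp [h]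
        rw [Finset.sum_congr rfl fun v _ => this v, hdeg w]
        push_cast
        rfl
      rw [← Fintype.sum_equiv (Fin.snocEquiv (fun _ => V))
        (fun p => if ∀ i : Fin (m + 1),
            A ((Fin.snocEquiv (fun _ => V) p) i.castSucc)
              ((Fin.snocEquiv (fun _ => V) p) i.succ) = 1
          then ∏ i : Fin (m + 1), ((deg ((Fin.snocEquiv (fun _ => V) p) i.castSucc) : ℝ))⁻¹
          else 0)
        _ (fun p => rfl)]
      rw [Fintype.sum_prod_type]
      have hterm : ∀ (v : V) (g : Fin (m + 1) → V),
          (if ∀ i : Fin (m + 1),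
              A ((Fin.snocEquiv (fun _ => V) (v, g)) i.castSucc)
                ((Fin.snocEquiv (fun _ => V) (v, g)) i.succ) = 1
            then ∏ i : Fin (m + 1),
              ((deg ((Fin.snocEquiv (fun _ => V) (v, g)) i.castSucc) : ℝ))⁻¹
            else 0)
          = (if (∀ i : Fin m, A (g i.castSucc) (g i.succ) = 1) then
              ((∏ i : Fin m, ((deg (g i.castSucc) : ℝ))⁻¹) * ((deg (g (Fin.last m)) : ℝ))⁻¹)
              else 0) * (if A (g (Fin.last m)) v = 1 then (1 : ℝ) else 0) := by
        intro v g
        have hsnoc : ∀ i : Fin (m + 1), (Fin.snocEquiv (fun _ => V) (v, g)) i.castSucc = g i := by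
          intro i
          simp [Fin.snocEquiv, Fin.snoc_castSucc]
        have hcond : (∀ i : Fin (m + 1),
            A ((Fin.snocEquiv (fun _ => V) (v, g)) i.castSucc)
              ((Fin.snocEquiv (fun _ => V) (v, g)) i.succ) = 1)
            ↔ (∀ i : Fin m, A (g i.castSucc) (g i.succ) = 1) ∧ A (g (Fin.last m)) v = 1 := by
          rw [Fin.forall_fin_succ']
          constructor
          · rintro ⟨h1, h2⟩
            constructor
            · intro i
              have := h1 i
              rwa [hsnoc, Fin.succ_castSucc, hsnoc] at this
            · have := h2
              rw [hsnoc, Fin.succ_last] at this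
              simpa [Fin.snocEquiv] using this
          · rintro ⟨h1, h2⟩
            constructor
            · intro i
              rw [hsnoc, Fin.succ_castSucc, hsnoc]
              exact h1 i
            · rw [hsnoc, Fin.succ_last]
              simpa [Fin.snocEquiv, Fin.snoc_last] using h2
        have hprod : ∏ i : Fin (m + 1),
            ((deg ((Fin.snocEquiv (fun _ => V) (v, g)) i.castSucc) : ℝ))⁻¹
            = (∏ i : Fin m, ((deg (g i.castSucc) : ℝ))⁻¹) * ((deg (g (Fin.last m)) : ℝ))⁻¹ := by
          rw [Finset.prod_congr rfl fun i _ => by rw [hsnoc i]]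
          exact Fin.prod_univ_castSucc (fun i => ((deg (g i) : ℝ))⁻¹)
        rw [hprod, if_congr hcond rfl rfl]
        by_cases h1 : ∀ i : Fin m, A (g i.castSucc) (g i.succ) = 1 <;>
          by_cases h2 : A (g (Fin.last m)) v = 1 <;>
            simp [h1, h2]
      calc ∑ v : V, ∑ g : Fin (m + 1) → V, _ = ∑ v : V, ∑ g : Fin (m + 1) → V,
            (if (∀ i : Fin m, A (g i.castSucc) (g i.succ) = 1) then
              ((∏ i : Fin m, ((deg (g i.castSucc) : ℝ))⁻¹) * ((deg (g (Fin.last m)) : ℝ))⁻¹)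
              else 0) * (if A (g (Fin.last m)) v = 1 then (1 : ℝ) else 0) := by
            exact Finset.sum_congr rfl fun v _ => Finset.sum_congr rfl fun g _ => hterm v g
        _ = ∑ g : Fin (m + 1) → V,
            (if (∀ i : Fin m, A (g i.castSucc) (g i.succ) = 1) then
              ((∏ i : Fin m, ((deg (g i.castSucc) : ℝ))⁻¹) * ((deg (g (Fin.last m)) : ℝ))⁻¹)
              else 0) * (deg (g (Fin.last m)) : ℝ) := by
            rw [Finset.sum_comm]
            exact Finset.sum_congr rfl fun g _ => by
              rw [← Finset.mul_sum, hsum]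
        _ = ∑ g : Fin (m + 1) → V,
            (if ∀ i : Fin m, A (g i.castSucc) (g i.succ) = 1
              then ∏ i : Fin m, ((deg (g i.castSucc) : ℝ))⁻¹ else 0) := by
            refine Finset.sum_congr rfl fun g _ => ?_
            have hne : ((deg (g (Fin.last m)) : ℝ)) ≠ 0 := by
              have := hpos (g (Fin.last m)); positivity
            by_cases h1 : ∀ i : Fin m, A (g i.castSucc) (g i.succ) = 1
            · rw [if_pos h1, if_pos h1, mul_assoc, inv_mul_cancel₀ hne, mul_one]
            · simp [h1]
        _ = (Fintype.card V : ℝ) := ih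

/-- `N(n+1, S)`, the number of length-`n` walks `(v₀,…,vₙ)` with
`Σ_{i<n} ⌈n·log₂ deg(v_i)⌉ = S`, is at most `2^{log₂|G| + S/n}`. -/
theorem stmt4 {V : Type*} [Fintype V] (A : Matrix V V ℕ)
    (hA : ∀ u v, A u v = 0 ∨ A u v = 1)
    (deg : V → ℕ) (hdeg : ∀ v, deg v = ∑ u : V, A v u) (hpos : ∀ v, 1 ≤ deg v)
    (n : ℕ) (hn : 1 ≤ n) (S : ℤ) :
    (Nat.card {f : Fin (n + 1) → V //
        (∀ i : Fin n, A (f i.castSucc) (f i.succ) = 1) ∧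
        (∑ i : Fin n, ⌈(n : ℝ) * Real.logb 2 (deg (f i.castSucc))⌉) = S} : ℝ)
      ≤ (2 : ℝ) ^ (Real.logb 2 (Fintype.card V) + (S : ℝ) / (n : ℝ)) := by
  classical
  rcases isEmpty_or_nonempty V with hV | hV
  · haveI : IsEmpty (Fin (n + 1) → V) := by infer_instance
    rw [Nat.card_of_isEmpty]
    simp only [Nat.cast_zero]
    positivity
  -- nonempty case
  set P : (Fin (n + 1) → V) → Prop := fun f =>
    (∀ i : Fin n, A (f i.castSucc) (f i.succ) = 1) ∧
    (∑ i : Fin n, ⌈(n : ℝ) * Real.logb 2 (deg (f i.castSucc))⌉) = S with hP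
  have hcard : (Nat.card {f : Fin (n + 1) → V // P f} : ℝ)
      = ((Finset.univ.filter P).card : ℝ) := by
    rw [Nat.card_eq_fintype_card, Fintype.card_subtype]
  have hnpos : (0 : ℝ) < n := by exact_mod_cast hn
  -- each walk in the set has weight at least 2^(-(S/n))
  have hweight : ∀ f : Fin (n + 1) → V, P f →
      (2 : ℝ) ^ (-((S : ℝ) / (n : ℝ))) ≤ ∏ i : Fin n, ((deg (f i.castSucc) : ℝ))⁻¹ := by
    intro f hf
    have hprodpos : (0 : ℝ) < ∏ i : Fin n, (deg (f i.castSucc) : ℝ) :=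
      Finset.prod_pos fun i _ => by exact_mod_cast hpos _
    have hle : Real.logb 2 (∏ i : Fin n, (deg (f i.castSucc) : ℝ)) ≤ (S : ℝ) / (n : ℝ) := by
      rw [le_div_iff₀ hnpos, mul_comm,
        Real.logb_prod _ _ (fun i _ => by have := hpos (f i.castSucc); positivity),
        Finset.mul_sum, ← hf.2]
      push_cast
      exact Finset.sum_le_sum fun i _ => Int.le_ceil _
    have hprodle : ∏ i : Fin n, (deg (f i.castSucc) : ℝ) ≤ (2 : ℝ) ^ ((S : ℝ) / (n : ℝ)) :=
      (Real.logb_le_iff_le_rpow (by norm_num) hprodpos).mp hle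
    have : ((2 : ℝ) ^ ((S : ℝ) / (n : ℝ)))⁻¹ ≤ (∏ i : Fin n, (deg (f i.castSucc) : ℝ))⁻¹ :=
      inv_anti₀ hprodpos hprodle
    rw [Finset.prod_inv_distrib]
    rwa [Real.rpow_neg (by norm_num : (0:ℝ) ≤ 2)]
  have key := walk_sum_eq A hA deg hdeg hpos n
  -- lower bound the full walk sum by the filtered sum
  have h1 : ∑ f ∈ Finset.univ.filter P, ∏ i : Fin n, ((deg (f i.castSucc) : ℝ))⁻¹
      ≤ (Fintype.card V : ℝ) := by
    rw [← key]
    rw [Finset.sum_filter]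
    refine Finset.sum_le_sum fun f _ => ?_
    by_cases hf : P f
    · rw [if_pos hf, if_pos hf.1]
    · rw [if_neg hf]
      split
      · positivity
      · exact le_rfl
  have h2 : ((Finset.univ.filter P).card : ℝ) * (2 : ℝ) ^ (-((S : ℝ) / (n : ℝ)))
      ≤ ∑ f ∈ Finset.univ.filter P, ∏ i : Fin n, ((deg (f i.castSucc) : ℝ))⁻¹ := by
    calc ((Finset.univ.filter P).card : ℝ) * (2 : ℝ) ^ (-((S : ℝ) / (n : ℝ)))
        = ∑ _f ∈ Finset.univ.filter P, (2 : ℝ) ^ (-((S : ℝ) / (n : ℝ))) := by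
          rw [Finset.sum_const, nsmul_eq_mul]
      _ ≤ _ := Finset.sum_le_sum fun f hf => hweight f (Finset.mem_filter.mp hf).2
  have h3 : ((Finset.univ.filter P).card : ℝ) * (2 : ℝ) ^ (-((S : ℝ) / (n : ℝ)))
      ≤ (Fintype.card V : ℝ) := le_trans h2 h1
  have hVpos : (0 : ℝ) < (Fintype.card V : ℝ) := by
    exact_mod_cast Fintype.card_pos
  rw [hcard]
  have hfinal : ((Finset.univ.filter P).card : ℝ)
      ≤ (Fintype.card V : ℝ) * (2 : ℝ) ^ ((S : ℝ) / (n : ℝ)) := by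
    have hr : (0 : ℝ) < (2 : ℝ) ^ ((S : ℝ) / (n : ℝ)) := Real.rpow_pos_of_pos (by norm_num) _
    have := mul_le_mul_of_nonneg_right h3 (le_of_lt hr)
    rwa [mul_assoc, ← Real.rpow_add (by norm_num), neg_add_cancel, Real.rpow_zero,
      mul_one] at this
  rw [Real.rpow_add (by norm_num), Real.rpow_logb (by norm_num) (by norm_num) hVpos]
  exact hfinal
end

section
/- Let μ be a distribution on a finite alphabet Σ with each μ(σ) = 2^{−ℓ_σ} a positive inverse power of 2, and let d = max_σ ℓ_σ. Construct the directed graph G_μ consisting of the Huffman tree of μ (edges directed from root towards leaves, internal nodes have out-degree 2) together with, for each symbol σ, a directed path of length d+1−ℓ_σ from the leaf of σ back to the root, using fresh vertices (out-degree 1 along these paths). Then a uniform random walk of length n(d+1) on G_μ starting at the root visits, in its i-th segment of length d+1, a unique leaf vertex, and the n leaves visited are i.i.d. with distribution μ. -/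
open Finset
open scoped Classical

/-- Vertices of `G_μ`: tree nodes (addresses, i.e. prefixes of codewords) on the left,
fresh return-path vertices `(σ, j)` on the right. The root is `Sum.inl []`. -/
abbrev GVert (S : Type*) := List Bool ⊕ (S × ℕ)

/-- Edge relation of `G_μ`: the Huffman tree of `μ` (given by a prefix-free code `c`
with codeword lengths `ℓ`), edges directed from the root towards the leaves, together
with, for each symbol `σ`, a directed path of length `d + 1 - ℓ σ` from the leaf `c σ`
back to the root (through `d - ℓ σ` fresh vertices `(σ, 1), …, (σ, d - ℓ σ)`). -/
def GEdge {S : Type*} (c : S → List Bool) (ℓ : S → ℕ) (d : ℕ) :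
    GVert S → GVert S → Prop
  | .inl p, .inl q =>
      (∃ b, q = p ++ [b] ∧ ∃ σ, q <+: c σ) ∨ (q = [] ∧ ∃ σ, p = c σ ∧ d = ℓ σ)
  | .inl p, .inr (σ, j) => p = c σ ∧ j = 1 ∧ 1 ≤ d - ℓ σ
  | .inr (σ, j), .inr (σ', j') => σ' = σ ∧ j' = j + 1 ∧ 1 ≤ j ∧ j + 1 ≤ d - ℓ σ
  | .inr (σ, j), .inl p => p = [] ∧ 1 ≤ j ∧ j = d - ℓ σ

/-- Out-degree of a vertex of `G_μ`. -/
noncomputable def outdeg {S : Type*} (c : S → List Bool) (ℓ : S → ℕ) (d : ℕ)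
    (v : GVert S) : ℕ :=
  Nat.card {w : GVert S // GEdge c ℓ d v w}

/-- Probability that the uniform random walk on `G_μ` follows a given trajectory. -/
noncomputable def walkProb {S : Type*} (c : S → List Bool) (ℓ : S → ℕ) (d : ℕ) {m : ℕ}
    (f : Fin (m + 1) → GVert S) : ℝ :=
  ∏ i : Fin m, (if GEdge c ℓ d (f i.castSucc) (f i.succ)
    then ((outdeg c ℓ d (f i.castSucc) : ℝ))⁻¹ else 0)

section Aux
variable {S : Type*} {c : S → List Bool} {ℓ : S → ℕ} {d : ℕ}

lemma pref_eq' (hpf : ∀ σ τ, σ ≠ τ → ¬(c σ <+: c τ)) {σ τ : S} (h : c σ <+: c τ) : σ = τ := by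
  by_contra hne; exact hpf σ τ hne h

/-- a proper prefix of a codeword is not a codeword -/
lemma notCode' (hpf : ∀ σ τ, σ ≠ τ → ¬(c σ <+: c τ)) {p : List Bool} {σ : S}
    (hp : p <+: c σ) (hne : p ≠ c σ) : ∀ τ, p ≠ c τ := by
  intro τ hpeq
  subst hpeq
  exact hne (congrArg c (pref_eq' hpf hp))

lemma extend' (hlen : ∀ σ, (c σ).length = ℓ σ) (hpf : ∀ σ τ, σ ≠ τ → ¬(c σ <+: c τ))
    (hd : ∀ σ, ℓ σ ≤ d)
    (hcov : ∀ s : List Bool, s.length = d → ∃ σ, c σ <+: s)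
    {p : List Bool} {σ : S} (hp : p <+: c σ) (hne : p ≠ c σ) (b : Bool) :
    ∃ τ, p ++ [b] <+: c τ := by
  have hplen : p.length < ℓ σ := by
    have h1 : p.length ≤ (c σ).length := hp.length_le
    rw [hlen] at h1
    rcases lt_or_eq_of_le h1 with h | h
    · exact h
    · exact absurd (hp.eq_of_length (by rw [hlen]; exact h)) hne
  set s : List Bool := (p ++ [b]) ++ List.replicate (d - (p.length + 1)) false with hs
  have hslen : s.length = d := by
    simp [hs, List.length_append]
    have := hd σ; omega
  obtain ⟨τ, hτ⟩ := hcov s hslen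
  have hpb : (p ++ [b]) <+: s := List.prefix_append _ _
  rcases List.prefix_or_prefix_of_prefix hτ hpb with h | h
  · -- c τ <+: p ++ [b]
    rcases le_or_gt (c τ).length p.length with h2 | h2
    · have hτp : c τ <+: p := List.prefix_of_prefix_length_le h (p.prefix_append [b]) h2
      have := pref_eq' hpf (hτp.trans hp)
      subst this
      rw [hlen] at h2
      omega
    · have h3 : (c τ).length = (p ++ [b]).length := by
        have := h.length_le
        simp only [List.length_append, List.length_cons, List.length_nil] at *
        omega
      exact ⟨τ, (h.eq_of_length h3) ▸ List.prefix_refl _⟩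
  · exact ⟨τ, h⟩
lemma edge_internal (hpf : ∀ σ τ, σ ≠ τ → ¬(c σ <+: c τ))
    (hlen : ∀ σ, (c σ).length = ℓ σ) (hd : ∀ σ, ℓ σ ≤ d)
    (hcov : ∀ s : List Bool, s.length = d → ∃ σ, c σ <+: s)
    {p : List Bool} {σ : S} (hp : p <+: c σ) (hne : p ≠ c σ) {w : GVert S} :
    GEdge c ℓ d (.inl p) w ↔ ∃ b, w = .inl (p ++ [b]) := by
  constructor
  · intro h
    match w, h with
    | .inl q, h =>
      rcases h with ⟨b, hq, _⟩ | ⟨_, τ, hpc, _⟩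
      · exact ⟨b, by rw [hq]⟩
      · exact absurd hpc (notCode' hpf hp hne τ)
    | .inr (τ, j), h => exact absurd h.1 (notCode' hpf hp hne τ)
  · rintro ⟨b, rfl⟩
    exact Or.inl ⟨b, rfl, extend' hlen hpf hd hcov hp hne b⟩

lemma outdeg_internal (hpf : ∀ σ τ, σ ≠ τ → ¬(c σ <+: c τ))
    (hlen : ∀ σ, (c σ).length = ℓ σ) (hd : ∀ σ, ℓ σ ≤ d)
    (hcov : ∀ s : List Bool, s.length = d → ∃ σ, c σ <+: s)
    {p : List Bool} {σ : S} (hp : p <+: c σ) (hne : p ≠ c σ) :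
    outdeg c ℓ d (.inl p) = 2 := by
  have hset : {w : GVert S | GEdge c ℓ d (.inl p) w} =
      {Sum.inl (p ++ [false]), Sum.inl (p ++ [true])} := by
    ext w
    rw [Set.mem_setOf_eq, edge_internal hpf hlen hd hcov hp hne]
    constructor
    · rintro ⟨b, rfl⟩; cases b <;> simp
    · rintro (rfl | rfl)
      exacts [⟨false, rfl⟩, ⟨true, rfl⟩]
  have key : Nat.card {w : GVert S | GEdge c ℓ d (.inl p) w} = 2 := by
    rw [Nat.card_coe_set_eq, hset, Set.ncard_pair (by simp)]
  exact key

lemma edge_leaf (hcinj : Function.Injective c) (hd : ∀ σ, ℓ σ ≤ d)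
    (hpf : ∀ σ τ, σ ≠ τ → ¬(c σ <+: c τ)) (hlen : ∀ σ, (c σ).length = ℓ σ)
    {σ : S} {w : GVert S} :
    GEdge c ℓ d (.inl (c σ)) w ↔ w = (if ℓ σ = d then .inl [] else .inr (σ, 1)) := by
  constructor
  · intro h
    match w, h with
    | .inl q, h =>
      rcases h with ⟨b, hq, τ, hτ⟩ | ⟨hq, τ, hcc, hdτ⟩
      · subst hq
        have h1 : c σ <+: c τ := ((c σ).prefix_append [b]).trans hτ
        have := pref_eq' hpf h1
        subst this
        have := hτ.length_le
        simp [List.length_append] at this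
      · have := hcinj hcc
        subst this
        rw [if_pos hdτ.symm, hq]
    | .inr (τ, j), h =>
      obtain ⟨hcc, hj, hjd⟩ := h
      have := hcinj hcc
      subst this
      have : ℓ σ ≠ d := by omega
      rw [if_neg this, hj]
  · intro h
    subst h
    split_ifs with hℓ
    · exact Or.inr ⟨rfl, σ, rfl, hℓ.symm⟩
    · exact ⟨rfl, rfl, by have := hd σ; omega⟩

lemma edge_ret {σ : S} {j : ℕ} (h1 : 1 ≤ j) (h2 : j ≤ d - ℓ σ) {w : GVert S} :
    GEdge c ℓ d (.inr (σ, j)) w ↔ w = (if j = d - ℓ σ then .inl [] else .inr (σ, j + 1)) := by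
  constructor
  · intro h
    match w, h with
    | .inl p, h =>
      obtain ⟨hp, _, hj⟩ := h
      rw [if_pos hj, hp]
    | .inr (τ, j'), h =>
      obtain ⟨hτ, hj', _, hjd⟩ := h
      subst hτ; subst hj'
      rw [if_neg (by omega)]
  · intro h
    subst h
    split_ifs with hj
    · exact ⟨rfl, h1, hj⟩
    · exact ⟨rfl, rfl, h1, by omega⟩

lemma outdeg_of_unique {v w₀ : GVert S}
    (h : ∀ w, GEdge c ℓ d v w ↔ w = w₀) : outdeg c ℓ d v = 1 := by
  have hset : {w : GVert S | GEdge c ℓ d v w} = {w₀} := by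
    ext w; rw [Set.mem_setOf_eq, h]; rfl
  have key : Nat.card {w : GVert S | GEdge c ℓ d v w} = 1 := by
    rw [Nat.card_coe_set_eq, hset, Set.ncard_singleton]
  exact key
end Aux

/-- canonical position within a segment, `r` steps after the root, having chosen symbol `σ` -/
def patt {S : Type*} (c : S → List Bool) (ℓ : S → ℕ) (σ : S) (r : ℕ) : GVert S :=
  if r ≤ ℓ σ then Sum.inl ((c σ).take r) else Sum.inr (σ, r - ℓ σ)

section Aux2
variable {S : Type*} {c : S → List Bool} {ℓ : S → ℕ} {d : ℕ}

lemma seg [Nonempty S] (hcinj : Function.Injective c)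
    (hpf : ∀ σ τ, σ ≠ τ → ¬(c σ <+: c τ)) (hlen : ∀ σ, (c σ).length = ℓ σ)
    (hd : ∀ σ, ℓ σ ≤ d)
    (f : ℕ → GVert S) (k : ℕ) (hroot : f k = Sum.inl [])
    (hedge : ∀ r < d + 1, GEdge c ℓ d (f (k + r)) (f (k + r + 1))) :
    ∃ σ, (∀ r ≤ d, f (k + r) = patt c ℓ σ r) ∧ f (k + (d + 1)) = Sum.inl [] := by
  classical
  have W : ∀ r, r ≤ d → (∀ r' < r, ∀ τ, f (k + r') ≠ Sum.inl (c τ)) →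
      ∃ p : List Bool, p.length = r ∧ (∃ σ, p <+: c σ) ∧
        ∀ r' ≤ r, f (k + r') = Sum.inl (p.take r') := by
    intro r
    induction r with
    | zero =>
      intro _ _
      exact ⟨[], rfl, ⟨Classical.arbitrary S, List.nil_prefix⟩,
        fun r' hr' => by simpa [Nat.le_zero.mp hr'] using hroot⟩
    | succ r ih =>
      intro hrd hnol
      obtain ⟨p, hplen, ⟨σ, hpσ⟩, hpform⟩ := ih (by omega) (fun r' h => hnol r' (by omega))
      have htake : p.take r = p := by rw [← hplen, List.take_length]
      have hfk : f (k + r) = Sum.inl p := by rw [hpform r le_rfl, htake]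
      have hpnc : ∀ τ, p ≠ c τ := by
        intro τ hpeq
        exact hnol r (by omega) τ (by rw [hfk, hpeq])
      have hedge' := hedge r (by omega)
      rw [hfk] at hedge'
      rcases hq : f (k + r + 1) with q | ⟨τ, j⟩
      · rw [hq] at hedge'
        rcases hedge' with ⟨b, hqb, hqp⟩ | ⟨_, τ, hpc, _⟩
        · subst hqb
          refine ⟨p ++ [b], by simp [hplen], hqp, ?_⟩
          intro r' hr'
          rcases Nat.lt_or_ge r' (r + 1) with h | h
          · rw [hpform r' (by omega), List.take_append_of_le_length (by omega)]
          · have hr'' : r' = r + 1 := by omega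
            subst hr''
            have hq' : f (k + (r + 1)) = Sum.inl (p ++ [b]) := hq
            rw [hq']
            congr 1
            rw [show r + 1 = (p ++ [b]).length by simp [hplen], List.take_length]
        · exact absurd hpc (hpnc τ)
      · rw [hq] at hedge'
        exact absurd hedge'.1 (hpnc τ)
  -- there is a leaf time
  have hex : ∃ r, r ≤ d ∧ ∃ τ, f (k + r) = Sum.inl (c τ) := by
    by_contra hno
    push_neg at hno
    obtain ⟨p, hplen, ⟨σ, hpσ⟩, hpform⟩ := W d le_rfl
      (fun r' hr' τ h => hno r' (by omega) τ h)
    have hlenle := hpσ.length_le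
    rw [hplen, hlen] at hlenle
    have hpc : p = c σ := hpσ.eq_of_length (by rw [hplen, hlen]; have := hd σ; omega)
    have htake : p.take d = p := by rw [← hplen, List.take_length]
    exact hno d le_rfl σ (by rw [hpform d le_rfl, htake, hpc])
  -- minimal leaf time
  let r₀ := Nat.find hex
  obtain ⟨hr₀d, σ, hσ⟩ := Nat.find_spec hex
  have hmin : ∀ r' < r₀, ∀ τ, f (k + r') ≠ Sum.inl (c τ) := by
    intro r' hr' τ h
    exact Nat.find_min hex hr' ⟨by omega, τ, h⟩
  obtain ⟨p, hplen, ⟨σ', hpσ'⟩, hpform⟩ := W r₀ hr₀d hmin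
  have htake : p.take r₀ = p := by rw [← hplen, List.take_length]
  have hpc : p = c σ := by
    have := hpform r₀ le_rfl
    rw [htake, hσ] at this
    exact (Sum.inl.inj this).symm
  have hr₀ : r₀ = ℓ σ := by rw [← hplen, hpc, hlen]
  -- the walk up to the leaf
  have hup : ∀ r ≤ ℓ σ, f (k + r) = Sum.inl ((c σ).take r) := by
    intro r hr
    rw [hpform r (by omega), hpc]
  -- the walk after the leaf
  have hleaf : f (k + ℓ σ) = Sum.inl (c σ) := by
    rw [hup (ℓ σ) le_rfl, ← hlen, List.take_length]
  have htail : ∀ j, 1 ≤ j → j ≤ d - ℓ σ → f (k + (ℓ σ + j)) = Sum.inr (σ, j) := by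
    intro j hj1 hjd
    induction j with
    | zero => omega
    | succ j ihj =>
      rcases Nat.eq_or_lt_of_le hj1 with h1 | h1
      · -- j + 1 = 1
        have hj0 : j = 0 := by omega
        subst hj0
        have he := hedge (ℓ σ) (by have := hd σ; omega)
        rw [hleaf] at he
        rw [edge_leaf hcinj hd hpf hlen] at he
        rw [if_neg (by omega)] at he
        exact he
      · have hprev := ihj (by omega) (by omega)
        have he := hedge (ℓ σ + j) (by omega)
        have hrwk : k + (ℓ σ + j) + 1 = k + (ℓ σ + (j + 1)) := by omega
        rw [hprev, hrwk] at he
        rw [edge_ret (by omega) (by omega)] at he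
        rw [if_neg (by omega)] at he
        exact he
  refine ⟨σ, ?_, ?_⟩
  · intro r hr
    unfold patt
    split_ifs with hrℓ
    · exact hup r hrℓ
    · have := htail (r - ℓ σ) (by omega) (by have := hd σ; omega)
      rw [show k + (ℓ σ + (r - ℓ σ)) = k + r by omega] at this
      exact this
  · -- return to the root
    rcases Nat.eq_or_lt_of_le (hd σ) with hℓd | hℓd
    · have he := hedge d (by omega)
      rw [show k + d = k + ℓ σ by omega, hleaf] at he
      rw [edge_leaf hcinj hd hpf hlen] at he
      rw [if_pos hℓd] at he
      rw [show k + (d + 1) = k + ℓ σ + 1 by omega]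
      exact he
    · have hlast := htail (d - ℓ σ) (by omega) le_rfl
      have he := hedge d (by omega)
      rw [show k + d = k + (ℓ σ + (d - ℓ σ)) by omega, hlast] at he
      rw [edge_ret (by omega) le_rfl, if_pos rfl] at he
      rw [show k + (d + 1) = k + (ℓ σ + (d - ℓ σ)) + 1 by omega]
      exact he
lemma patt_zero {σ : S} : patt c ℓ σ 0 = Sum.inl ([] : List Bool) := by simp [patt]

lemma patt_leaf (hpf : ∀ σ τ, σ ≠ τ → ¬(c σ <+: c τ)) (hlen : ∀ σ, (c σ).length = ℓ σ)
    {σ τ : S} {r : ℕ} :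
    patt c ℓ σ r = Sum.inl (c τ) ↔ (r = ℓ σ ∧ τ = σ) := by
  unfold patt
  split_ifs with h
  · constructor
    · intro he
      have he' : (c σ).take r = c τ := Sum.inl.inj he
      have hpre : c τ <+: c σ := he' ▸ List.take_prefix r (c σ)
      have hτσ : τ = σ := pref_eq' hpf hpre
      have hL : ((c σ).take r).length = (c τ).length := by rw [he']
      have hmin : r ⊓ ℓ σ = r := inf_eq_left.2 h
      rw [List.length_take, hlen, hlen, hmin] at hL
      exact ⟨by rw [hL, hτσ], hτσ⟩
    · rintro ⟨rfl, rfl⟩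
      rw [← hlen, List.take_length]
  · constructor
    · intro he; exact absurd he (by simp)
    · rintro ⟨rfl, rfl⟩; omega

lemma step_edge (hlen : ∀ σ, (c σ).length = ℓ σ) {σ : S} {r : ℕ} (hr : r < d) :
    GEdge c ℓ d (patt c ℓ σ r) (patt c ℓ σ (r + 1)) := by
  unfold patt
  rcases lt_trichotomy r (ℓ σ) with h | h | h
  · rw [if_pos (by omega), if_pos (by omega)]
    have hrlen : r < (c σ).length := by rw [hlen]; exact h
    refine Or.inl ⟨(c σ)[r], ?_, σ, List.take_prefix _ _⟩
    rw [← List.take_concat_get hrlen, List.concat_eq_append]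
  · subst h
    rw [if_pos le_rfl, if_neg (by omega), ← hlen, List.take_length]
    exact ⟨rfl, by omega, by omega⟩
  · rw [if_neg (by omega), if_neg (by omega)]
    exact ⟨rfl, by omega, by omega, by omega⟩

lemma step_edge_end (hlen : ∀ σ, (c σ).length = ℓ σ) (hd : ∀ σ, ℓ σ ≤ d) {σ : S} :
    GEdge c ℓ d (patt c ℓ σ d) (Sum.inl ([] : List Bool)) := by
  unfold patt
  split_ifs with h
  · have hde : d = ℓ σ := le_antisymm h (hd σ)
    rw [show (c σ).take d = c σ from by rw [hde, ← hlen σ]; exact List.take_length]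
    exact Or.inr ⟨rfl, σ, rfl, hde⟩
  · exact ⟨rfl, by omega, rfl⟩

lemma outdeg_patt (hcinj : Function.Injective c)
    (hpf : ∀ σ τ, σ ≠ τ → ¬(c σ <+: c τ)) (hlen : ∀ σ, (c σ).length = ℓ σ)
    (hd : ∀ σ, ℓ σ ≤ d) (hcov : ∀ s : List Bool, s.length = d → ∃ σ, c σ <+: s)
    {σ : S} {r : ℕ} (hr : r ≤ d) :
    outdeg c ℓ d (patt c ℓ σ r) = if r < ℓ σ then 2 else 1 := by
  unfold patt
  rcases lt_trichotomy r (ℓ σ) with h | h | h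
  · rw [if_pos (by omega), if_pos h]
    refine outdeg_internal hpf hlen hd hcov (List.take_prefix r (c σ)) ?_
    intro he
    have : ((c σ).take r).length = (c σ).length := by rw [he]
    rw [List.length_take, hlen] at this
    omega
  · subst h
    rw [if_pos le_rfl, if_neg (by omega), ← hlen, List.take_length]
    exact outdeg_of_unique (fun w => edge_leaf hcinj hd hpf hlen)
  · rw [if_neg (by omega), if_neg (by omega)]
    exact outdeg_of_unique (fun w => edge_ret (by omega) (by have := hd σ; omega))

lemma walkstruct [Nonempty S] (hcinj : Function.Injective c)
    (hpf : ∀ σ τ, σ ≠ τ → ¬(c σ <+: c τ)) (hlen : ∀ σ, (c σ).length = ℓ σ)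
    (hd : ∀ σ, ℓ σ ≤ d) (f : ℕ → GVert S) (N : ℕ)
    (hroot : f 0 = Sum.inl []) (hedge : ∀ t < N * (d + 1), GEdge c ℓ d (f t) (f (t + 1))) :
    ∃ G : ℕ → S, ∀ i < N, (∀ r ≤ d, f (i * (d + 1) + r) = patt c ℓ (G i) r) ∧
      f (i * (d + 1) + (d + 1)) = Sum.inl [] := by
  have hseg : ∀ i, i < N → f (i * (d + 1)) = Sum.inl [] →
      ∃ σ, (∀ r ≤ d, f (i * (d + 1) + r) = patt c ℓ σ r) ∧
        f (i * (d + 1) + (d + 1)) = Sum.inl [] := by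
    intro i hi hri
    apply seg hcinj hpf hlen hd f _ hri
    intro r hr
    apply hedge
    have h1 : (i + 1) * (d + 1) ≤ N * (d + 1) := Nat.mul_le_mul_right _ (by omega)
    have h2 : (i + 1) * (d + 1) = i * (d + 1) + (d + 1) := by ring
    omega
  have hroots : ∀ i, i ≤ N → f (i * (d + 1)) = Sum.inl [] := by
    intro i
    induction i with
    | zero => intro _; simpa using hroot
    | succ i ih =>
      intro hi
      obtain ⟨σ, _, hret⟩ := hseg i (by omega) (ih (by omega))
      rw [show (i + 1) * (d + 1) = i * (d + 1) + (d + 1) by ring]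
      exact hret
  have H : ∀ i, i < N → ∃ σ, (∀ r ≤ d, f (i * (d + 1) + r) = patt c ℓ σ r) ∧
      f (i * (d + 1) + (d + 1)) = Sum.inl [] :=
    fun i hi => hseg i hi (hroots i (le_of_lt hi))
  choose! G hG using H
  exact ⟨G, hG⟩
end Aux2

lemma cover' {S : Type*} [Fintype S] [Nonempty S] (μ : S → ℝ) (ℓ : S → ℕ)
    (hμ : ∀ σ, μ σ = ((2:ℝ) ^ ℓ σ)⁻¹) (hsum : ∑ σ : S, μ σ = 1)
    (c : S → List Bool) (hlen : ∀ σ, (c σ).length = ℓ σ)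
    (hpf : ∀ σ τ, σ ≠ τ → ¬(c σ <+: c τ)) (d : ℕ) (hd : ∀ σ, ℓ σ ≤ d) :
    ∀ s : List Bool, s.length = d → ∃ σ, c σ <+: s := by
  classical
  have hsum' : ∑ σ : S, 2 ^ (d - ℓ σ) = 2 ^ d := by
    have key : ((∑ σ : S, 2 ^ (d - ℓ σ) : ℕ) : ℝ) = ((2 ^ d : ℕ) : ℝ) := by
      push_cast
      have h1 : ∀ σ : S, (2:ℝ) ^ (d - ℓ σ) = 2 ^ d * μ σ := by
        intro σ
        rw [hμ]
        have h2 : (2:ℝ) ^ (d - ℓ σ) * 2 ^ (ℓ σ) = 2 ^ d := by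
          rw [← pow_add]; congr 1; have := hd σ; omega
        have : (2:ℝ) ^ (ℓ σ) ≠ 0 := by positivity
        field_simp
        linarith [h2]
      rw [Finset.sum_congr rfl (fun σ _ => h1 σ), ← Finset.mul_sum, hsum, mul_one]
    exact_mod_cast key
  set T : Finset (List Bool) := Finset.univ.image (fun v : List.Vector Bool d => v.toList) with hT
  have hmemT : ∀ s : List Bool, s ∈ T ↔ s.length = d := by
    intro s
    simp only [hT, Finset.mem_image, Finset.mem_univ, true_and]
    constructor
    · rintro ⟨v, rfl⟩; exact v.toList_length
    · intro h; exact ⟨⟨s, h⟩, rfl⟩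
  set A : S → Finset (List Bool) :=
    fun σ => Finset.univ.image (fun v : List.Vector Bool (d - ℓ σ) => c σ ++ v.toList) with hA
  have hmemA : ∀ σ s, s ∈ A σ ↔ (s.length = d ∧ c σ <+: s) := by
    intro σ s
    simp only [hA, Finset.mem_image, Finset.mem_univ, true_and]
    constructor
    · rintro ⟨v, rfl⟩
      constructor
      · rw [List.length_append, hlen, v.toList_length]; have := hd σ; omega
      · exact List.prefix_append _ _
    · rintro ⟨hlen', ⟨t, rfl⟩⟩
      refine ⟨⟨t, ?_⟩, rfl⟩
      rw [List.length_append, hlen] at hlen'; omega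
  have hcardA : ∀ σ, (A σ).card = 2 ^ (d - ℓ σ) := by
    intro σ
    rw [hA]
    rw [Finset.card_image_of_injective _
      (fun v w h => List.Vector.toList_injective (List.append_cancel_left h))]
    simp [card_vector]
  have hdisj : ∀ x ∈ (Finset.univ : Finset S), ∀ y ∈ Finset.univ, x ≠ y → Disjoint (A x) (A y) := by
    intro x _ y _ hxy
    rw [Finset.disjoint_left]
    intro s hx hy
    obtain ⟨_, hpx⟩ := (hmemA x s).1 hx
    obtain ⟨_, hpy⟩ := (hmemA y s).1 hy
    rcases List.prefix_or_prefix_of_prefix hpx hpy with h | h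
    · exact hxy (pref_eq' hpf h)
    · exact hxy (pref_eq' hpf h).symm
  have hsub : Finset.univ.biUnion A ⊆ T := by
    intro s hs
    obtain ⟨σ, _, hσ⟩ := Finset.mem_biUnion.1 hs
    exact (hmemT s).2 ((hmemA σ s).1 hσ).1
  have hTcard : T.card = 2 ^ d := by
    rw [hT, Finset.card_image_of_injective _ List.Vector.toList_injective]
    simp [card_vector]
  have hBcard : (Finset.univ.biUnion A).card = 2 ^ d := by
    rw [Finset.card_biUnion hdisj]
    simpa [hcardA] using hsum'
  have hEq : Finset.univ.biUnion A = T :=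
    Finset.eq_of_subset_of_card_le hsub (by rw [hBcard, hTcard])
  intro s hs
  have : s ∈ Finset.univ.biUnion A := by rw [hEq]; exact (hmemT s).2 hs
  obtain ⟨σ, _, hσ⟩ := Finset.mem_biUnion.1 this
  exact ⟨σ, ((hmemA σ s).1 hσ).2⟩

/-- A uniform random walk of length `n(d+1)` on `G_μ` starting at the root visits, in
each of its `n` segments of length `d+1`, a unique leaf vertex, and the `n` visited
leaves are i.i.d. with distribution `μ`. -/
theorem stmt12 {S : Type*} [Fintype S] [Nonempty S] (μ : S → ℝ) (ℓ : S → ℕ)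
    (hℓ : ∀ σ, 1 ≤ ℓ σ) (hμ : ∀ σ, μ σ = ((2 : ℝ) ^ ℓ σ)⁻¹) (hsum : ∑ σ : S, μ σ = 1)
    (c : S → List Bool) (hcinj : Function.Injective c) (hlen : ∀ σ, (c σ).length = ℓ σ)
    (hpf : ∀ σ τ, σ ≠ τ → ¬(c σ <+: c τ))
    (d : ℕ) (hd : ∀ σ, ℓ σ ≤ d) (hd' : ∃ σ, ℓ σ = d)
    (n : ℕ) (hn : 1 ≤ n) (m : ℕ) (hm : m = n * (d + 1)) :
    (∀ f : Fin (m + 1) → GVert S, walkProb c ℓ d f ≠ 0 → f 0 = Sum.inl [] →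
      ∀ i : Fin n, ∃! t : Fin (m + 1),
        ((i : ℕ) * (d + 1) < (t : ℕ) ∧ (t : ℕ) ≤ ((i : ℕ) + 1) * (d + 1)) ∧
          ∃ σ, f t = Sum.inl (c σ)) ∧
    ∀ g : Fin n → S,
      (∑' f : Fin (m + 1) → GVert S,
        Set.indicator {f : Fin (m + 1) → GVert S | f 0 = Sum.inl [] ∧
          ∀ i : Fin n, ∃ t : Fin (m + 1),
            (i : ℕ) * (d + 1) < (t : ℕ) ∧ (t : ℕ) ≤ ((i : ℕ) + 1) * (d + 1) ∧
              f t = Sum.inl (c (g i))} (walkProb c ℓ d) f)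
        = ∏ i : Fin n, μ (g i) := by
  classical
  subst hm
  have hcov : ∀ s : List Bool, s.length = d → ∃ σ, c σ <+: s :=
    cover' μ ℓ hμ hsum c hlen hpf d hd
  have hmul : ∀ i : ℕ, i < n → (i + 1) * (d + 1) ≤ n * (d + 1) :=
    fun i hi => Nat.mul_le_mul_right _ (by omega)
  have hmul2 : ∀ i : ℕ, (i + 1) * (d + 1) = i * (d + 1) + (d + 1) := fun i => by ring
  -- structure of any admissible walk
  have hwalk : ∀ f : Fin (n * (d + 1) + 1) → GVert S, walkProb c ℓ d f ≠ 0 →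
      f 0 = Sum.inl [] →
      ∃ G' : ℕ → S, ∀ i, i < n →
        (∀ r, r ≤ d → ∀ (h : i * (d + 1) + r < n * (d + 1) + 1),
            f ⟨i * (d + 1) + r, h⟩ = patt c ℓ (G' i) r) ∧
        (∀ (h : i * (d + 1) + (d + 1) < n * (d + 1) + 1),
            f ⟨i * (d + 1) + (d + 1), h⟩ = Sum.inl []) := by
    intro f hP h0
    set fN : ℕ → GVert S := fun t =>
      if h : t < n * (d + 1) + 1 then f ⟨t, h⟩ else Sum.inl [] with hfN
    have hfNeq : ∀ (t : ℕ) (h : t < n * (d + 1) + 1), fN t = f ⟨t, h⟩ :=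
      fun t h => dif_pos h
    have hE : ∀ j : Fin (n * (d + 1)), GEdge c ℓ d (f j.castSucc) (f j.succ) := by
      intro j
      by_contra hc
      apply hP
      unfold walkProb
      exact Finset.prod_eq_zero (Finset.mem_univ j) (by rw [if_neg hc])
    have hedge : ∀ t, t < n * (d + 1) → GEdge c ℓ d (fN t) (fN (t + 1)) := by
      intro t ht
      rw [hfNeq t (by omega), hfNeq (t + 1) (by omega)]
      exact hE ⟨t, ht⟩
    have hroot : fN 0 = Sum.inl [] := by rw [hfNeq 0 (by omega)]; exact h0
    obtain ⟨G', hG'⟩ := walkstruct hcinj hpf hlen hd fN n hroot hedge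
    refine ⟨G', fun i hi => ⟨fun r hr h => ?_, fun h => ?_⟩⟩
    · rw [← hfNeq _ h]; exact (hG' i hi).1 r hr
    · rw [← hfNeq _ h]; exact (hG' i hi).2
  constructor
  · -- part 1
    intro f hP h0 i
    obtain ⟨G, hG⟩ := hwalk f hP h0
    obtain ⟨hGp, hGr⟩ := hG (i : ℕ) i.isLt
    have hb : (i : ℕ) * (d + 1) + (d + 1) ≤ n * (d + 1) := by
      have := hmul (i : ℕ) i.isLt; have := hmul2 (i : ℕ); omega
    have hℓGi := hℓ (G (i : ℕ)); have hdGi := hd (G (i : ℕ))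
    refine ⟨⟨(i : ℕ) * (d + 1) + ℓ (G (i : ℕ)), by omega⟩, ⟨⟨?_, ?_⟩, G (i : ℕ), ?_⟩, ?_⟩
    · show (i : ℕ) * (d + 1) < (i : ℕ) * (d + 1) + ℓ (G (i : ℕ)); omega
    · show (i : ℕ) * (d + 1) + ℓ (G (i : ℕ)) ≤ ((i : ℕ) + 1) * (d + 1)
      have := hmul2 (i : ℕ); omega
    · rw [hGp (ℓ (G (i : ℕ))) hdGi (by omega)]
      exact (patt_leaf hpf hlen).2 ⟨rfl, rfl⟩
    · rintro t ⟨⟨ht1, ht2⟩, τ, hτ⟩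
      set r : ℕ := (t : ℕ) - (i : ℕ) * (d + 1) with hrdef
      have hr1 : 1 ≤ r := by omega
      have hr2 : r ≤ d + 1 := by have := hmul2 (i : ℕ); omega
      have htval : (t : ℕ) = (i : ℕ) * (d + 1) + r := by omega
      rcases Nat.lt_or_ge r (d + 1) with hrd | hrd
      · have hp := hGp r (by omega) (by omega)
        have hft : f t = patt c ℓ (G (i : ℕ)) r := by
          rw [← hp]; congr 1; exact Fin.ext (by simp [htval])
        rw [hft] at hτ
        obtain ⟨hrℓ, _⟩ := (patt_leaf hpf hlen).1 hτ
        exact Fin.ext (by simp [htval, hrℓ])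
      · have hrd' : r = d + 1 := by omega
        have hp := hGr (by omega)
        have hft : f t = Sum.inl ([] : List Bool) := by
          rw [← hp]; congr 1; exact Fin.ext (by simp [htval, hrd'])
        rw [hft] at hτ
        have hcτ : c τ = [] := (Sum.inl.inj hτ).symm
        have hlτ := hlen τ
        rw [hcτ] at hlτ
        simp at hlτ
        have := hℓ τ
        omega
  · -- part 2
    intro g
    set G : ℕ → S := fun i => if h : i < n then g ⟨i, h⟩ else g ⟨0, hn⟩ with hGdef
    have hGi : ∀ i : Fin n, G (i : ℕ) = g i := by
      intro i; simp only [hGdef, i.isLt, dif_pos]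
    have hdm : ∀ i r : ℕ, r < d + 1 →
        (i * (d + 1) + r) / (d + 1) = i ∧ (i * (d + 1) + r) % (d + 1) = r := by
      intro i r hr
      constructor
      · rw [add_comm, mul_comm, Nat.add_mul_div_left _ _ (by omega),
          Nat.div_eq_of_lt hr, zero_add]
      · rw [add_comm, mul_comm, Nat.add_mul_mod_self_left, Nat.mod_eq_of_lt hr]
    set f₀ : Fin (n * (d + 1) + 1) → GVert S :=
      fun t => patt c ℓ (G ((t : ℕ) / (d + 1))) ((t : ℕ) % (d + 1)) with hf₀
    -- value of f₀ at canonical leaf times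
    have hf₀leaf : ∀ i : Fin n, ∀ (h : (i : ℕ) * (d + 1) + ℓ (g i) < n * (d + 1) + 1),
        f₀ ⟨(i : ℕ) * (d + 1) + ℓ (g i), h⟩ = Sum.inl (c (g i)) := by
      intro i h
      have hdgi := hd (g i)
      obtain ⟨hq, hr⟩ := hdm (i : ℕ) (ℓ (g i)) (by omega)
      show patt c ℓ (G (((i : ℕ) * (d + 1) + ℓ (g i)) / (d + 1)))
        (((i : ℕ) * (d + 1) + ℓ (g i)) % (d + 1)) = Sum.inl (c (g i))
      rw [hq, hr, hGi i]
      exact (patt_leaf hpf hlen).2 ⟨rfl, rfl⟩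
    have hb : ∀ i : Fin n, (i : ℕ) * (d + 1) + (d + 1) ≤ n * (d + 1) := by
      intro i; have := hmul (i : ℕ) i.isLt; have := hmul2 (i : ℕ); omega
    have hf₀mem : f₀ 0 = Sum.inl [] ∧
        ∀ i : Fin n, ∃ t : Fin (n * (d + 1) + 1),
          (i : ℕ) * (d + 1) < (t : ℕ) ∧ (t : ℕ) ≤ ((i : ℕ) + 1) * (d + 1) ∧
            f₀ t = Sum.inl (c (g i)) := by
      constructor
      · show patt c ℓ (G (((0 : Fin (n * (d + 1) + 1)) : ℕ) / (d + 1)))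
          (((0 : Fin (n * (d + 1) + 1)) : ℕ) % (d + 1)) = Sum.inl []
        simp only [Fin.val_zero, Nat.zero_div, Nat.zero_mod]
        exact patt_zero
      · intro i
        have hbi := hb i
        have hℓgi := hℓ (g i); have hdgi := hd (g i)
        have hm2 := hmul2 (i : ℕ)
        refine ⟨⟨(i : ℕ) * (d + 1) + ℓ (g i), by omega⟩, by simp; omega, by simp; omega,
          hf₀leaf i (by omega)⟩
    -- the walk probability of f₀
    have hstep : ∀ j : Fin (n * (d + 1)),
        (if GEdge c ℓ d (f₀ j.castSucc) (f₀ j.succ)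
          then ((outdeg c ℓ d (f₀ j.castSucc) : ℝ))⁻¹ else 0)
        = if (j : ℕ) % (d + 1) < ℓ (G ((j : ℕ) / (d + 1))) then (2 : ℝ)⁻¹ else 1 := by
      intro j
      have hrd : (j : ℕ) % (d + 1) < d + 1 := Nat.mod_lt _ (by omega)
      have hjdm := Nat.div_add_mod (j : ℕ) (d + 1)
      have hjdm2 : ((j : ℕ) / (d + 1)) * (d + 1) + (j : ℕ) % (d + 1) = (j : ℕ) := by
        rw [mul_comm]; exact hjdm
      have hcs : f₀ j.castSucc = patt c ℓ (G ((j : ℕ) / (d + 1))) ((j : ℕ) % (d + 1)) := by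
        show patt c ℓ (G ((j.castSucc : ℕ) / (d + 1))) ((j.castSucc : ℕ) % (d + 1)) = _
        rw [Fin.coe_castSucc]
      rcases Nat.lt_or_ge ((j : ℕ) % (d + 1)) d with hr | hr
      · have hsucc : f₀ j.succ =
            patt c ℓ (G ((j : ℕ) / (d + 1))) ((j : ℕ) % (d + 1) + 1) := by
          show patt c ℓ (G ((j.succ : ℕ) / (d + 1))) ((j.succ : ℕ) % (d + 1)) = _
          have hjv : (j.succ : ℕ) = (j : ℕ) / (d + 1) * (d + 1) + ((j : ℕ) % (d + 1) + 1) := by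
            rw [Fin.val_succ]; omega
          obtain ⟨hq, hr'⟩ := hdm ((j : ℕ) / (d + 1)) ((j : ℕ) % (d + 1) + 1) (by omega)
          rw [hjv, hq, hr']
        rw [hsucc, hcs, if_pos (step_edge hlen hr),
          outdeg_patt hcinj hpf hlen hd hcov (show (j : ℕ) % (d + 1) ≤ d from by omega)]
        split_ifs <;> simp
      · have hrd' : (j : ℕ) % (d + 1) = d := by omega
        have hsucc : f₀ j.succ = Sum.inl ([] : List Bool) := by
          show patt c ℓ (G ((j.succ : ℕ) / (d + 1))) ((j.succ : ℕ) % (d + 1)) = _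
          have hjv : (j.succ : ℕ) = ((j : ℕ) / (d + 1) + 1) * (d + 1) + 0 := by
            rw [Fin.val_succ]; have := hmul2 ((j : ℕ) / (d + 1)); omega
          obtain ⟨hq, hr'⟩ := hdm ((j : ℕ) / (d + 1) + 1) 0 (by omega)
          rw [hjv, hq, hr']
          exact patt_zero
        rw [hsucc, hcs, hrd', if_pos (step_edge_end hlen hd),
          outdeg_patt hcinj hpf hlen hd hcov (le_refl d)]
        have hnlt : ¬ d < ℓ (G ((j : ℕ) / (d + 1))) := by
          have := hd (G ((j : ℕ) / (d + 1))); omega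
        rw [if_neg hnlt, if_neg hnlt]
        simp
    have hprob : walkProb c ℓ d f₀ = ∏ i : Fin n, μ (g i) := by
      unfold walkProb
      rw [Finset.prod_congr rfl (fun j _ => hstep j)]
      have hre := Equiv.prod_comp (finProdFinEquiv : Fin n × Fin (d + 1) ≃ Fin (n * (d + 1)))
        (fun j : Fin (n * (d + 1)) =>
          if (j : ℕ) % (d + 1) < ℓ (G ((j : ℕ) / (d + 1))) then (2 : ℝ)⁻¹ else 1)
      rw [← hre, Fintype.prod_prod_type]
      have hinner : ∀ i : Fin n, ∀ r : Fin (d + 1),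
          (if ((finProdFinEquiv (i, r) : Fin (n * (d + 1))) : ℕ) % (d + 1) <
              ℓ (G (((finProdFinEquiv (i, r) : Fin (n * (d + 1))) : ℕ) / (d + 1)))
            then (2 : ℝ)⁻¹ else 1)
          = if (r : ℕ) < ℓ (g i) then (2 : ℝ)⁻¹ else 1 := by
        intro i r
        have hval : ((finProdFinEquiv (i, r) : Fin (n * (d + 1))) : ℕ)
            = (i : ℕ) * (d + 1) + (r : ℕ) := by
          rw [finProdFinEquiv_apply_val]; ring
        obtain ⟨hq, hr'⟩ := hdm (i : ℕ) (r : ℕ) r.isLt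
        rw [hval, hq, hr', hGi i]
      rw [Finset.prod_congr rfl (fun i _ => Finset.prod_congr rfl (fun r _ => hinner i r))]
      refine Finset.prod_congr rfl (fun i _ => ?_)
      rw [Finset.prod_ite, Finset.prod_const, Finset.prod_const, one_pow, mul_one]
      have hcard : (Finset.univ.filter (fun r : Fin (d + 1) => (r : ℕ) < ℓ (g i))).card
          = ℓ (g i) := by
        have hle : ℓ (g i) ≤ d + 1 := by have := hd (g i); omega
        have hfe : (Finset.univ.filter (fun r : Fin (d + 1) => (r : ℕ) < ℓ (g i)))
            = (Finset.range (ℓ (g i))).attachFin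
              (fun x hx => lt_of_lt_of_le (Finset.mem_range.1 hx) hle) := by
          ext r
          simp [Finset.mem_attachFin]
        rw [hfe, Finset.card_attachFin, Finset.card_range]
      rw [hcard, hμ, inv_pow]
    -- conclude by isolating f₀
    have hf₀mem' : f₀ ∈ {f : Fin (n * (d + 1) + 1) → GVert S | f 0 = Sum.inl [] ∧
        ∀ i : Fin n, ∃ t : Fin (n * (d + 1) + 1),
          (i : ℕ) * (d + 1) < (t : ℕ) ∧ (t : ℕ) ≤ ((i : ℕ) + 1) * (d + 1) ∧
            f t = Sum.inl (c (g i))} := hf₀mem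
    rw [tsum_eq_single f₀ ?_]
    · rw [Set.indicator_of_mem hf₀mem', hprob]
    · -- all other walks contribute zero
      intro f' hne
      by_contra hind
      have hmem : f' ∈ {f : Fin (n * (d + 1) + 1) → GVert S | f 0 = Sum.inl [] ∧
          ∀ i : Fin n, ∃ t : Fin (n * (d + 1) + 1),
            (i : ℕ) * (d + 1) < (t : ℕ) ∧ (t : ℕ) ≤ ((i : ℕ) + 1) * (d + 1) ∧
              f t = Sum.inl (c (g i))} := by
        by_contra hmem
        exact hind (Set.indicator_of_notMem hmem _)
      rw [Set.indicator_of_mem hmem] at hind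
      obtain ⟨h0', hvis⟩ := hmem
      obtain ⟨G', hG'⟩ := hwalk f' hind h0'
      -- the symbols of f' agree with g
      have hG'g : ∀ i : Fin n, G' (i : ℕ) = g i := by
        intro i
        obtain ⟨t, ht1, ht2, hft⟩ := hvis i
        obtain ⟨hGp, hGr⟩ := hG' (i : ℕ) i.isLt
        have hm2 := hmul2 (i : ℕ)
        set r : ℕ := (t : ℕ) - (i : ℕ) * (d + 1) with hrdef
        have htval : (t : ℕ) = (i : ℕ) * (d + 1) + r := by omega
        rcases Nat.lt_or_ge r (d + 1) with hrd | hrd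
        · have hp := hGp r (by omega) (by omega)
          have hft' : f' t = patt c ℓ (G' (i : ℕ)) r := by
            rw [← hp]; congr 1; exact Fin.ext (by simp [htval])
          rw [hft'] at hft
          exact ((patt_leaf hpf hlen).1 hft).2.symm ▸ rfl
        · have hrd' : r = d + 1 := by omega
          have hp := hGr (by omega)
          have hft' : f' t = Sum.inl ([] : List Bool) := by
            rw [← hp]; congr 1; exact Fin.ext (by simp [htval, hrd'])
          rw [hft'] at hft
          have hcτ : c (g i) = [] := (Sum.inl.inj hft).symm
          have hlτ := hlen (g i)
          rw [hcτ] at hlτ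
          simp at hlτ
          have := hℓ (g i)
          omega
      -- hence f' = f₀
      apply hne
      funext t
      have htle : (t : ℕ) ≤ n * (d + 1) := by omega
      rcases Nat.lt_or_ge (t : ℕ) (n * (d + 1)) with htm | htm
      · have hrd : (t : ℕ) % (d + 1) < d + 1 := Nat.mod_lt _ (by omega)
        have htval : (t : ℕ) = ((t : ℕ) / (d + 1)) * (d + 1) + ((t : ℕ) % (d + 1)) := by
          exact (Nat.div_add_mod' _ _).symm
        have hin : (t : ℕ) / (d + 1) < n := by
          by_contra hin
          push_neg at hin
          have := Nat.mul_le_mul_right (d + 1) hin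
          omega
        obtain ⟨hGp, _⟩ := hG' ((t : ℕ) / (d + 1)) hin
        have hp := hGp ((t : ℕ) % (d + 1)) (by omega) (by omega)
        have hft' : f' t = patt c ℓ (G' ((t : ℕ) / (d + 1))) ((t : ℕ) % (d + 1)) := by
          rw [← hp]; congr 1; exact Fin.ext (by simp [← htval])
        have hf₀t : f₀ t = patt c ℓ (G ((t : ℕ) / (d + 1))) ((t : ℕ) % (d + 1)) := rfl
        rw [hft', hf₀t]
        have hGG : G' ((t : ℕ) / (d + 1)) = G ((t : ℕ) / (d + 1)) := by
          have h1 := hG'g ⟨(t : ℕ) / (d + 1), hin⟩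
          have h2 : G ((t : ℕ) / (d + 1)) = g ⟨(t : ℕ) / (d + 1), hin⟩ := by
            simp only [hGdef, hin, dif_pos]
          rw [h2]; exact h1
        rw [hGG]
      · have htm' : (t : ℕ) = n * (d + 1) := by omega
        obtain ⟨_, hGr⟩ := hG' (n - 1) (by omega)
        have hnv : (n - 1) * (d + 1) + (d + 1) = n * (d + 1) := by
          have := hmul2 (n - 1); have : (n - 1) + 1 = n := by omega
          calc (n - 1) * (d + 1) + (d + 1) = ((n - 1) + 1) * (d + 1) := by ring
            _ = n * (d + 1) := by rw [this]
        have hp := hGr (by omega)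
        have hft' : f' t = Sum.inl ([] : List Bool) := by
          rw [← hp]; congr 1; exact Fin.ext (by simp [htm', hnv])
        have hf₀t : f₀ t = Sum.inl ([] : List Bool) := by
          show patt c ℓ (G ((t : ℕ) / (d + 1))) ((t : ℕ) % (d + 1)) = _
          have h0 : n * (d + 1) = n * (d + 1) + 0 := rfl
          obtain ⟨hq, hr⟩ := hdm n 0 (by omega)
          rw [htm', show n * (d + 1) = n * (d + 1) + 0 from rfl] at *
          rw [hq, hr]
          exact patt_zero
        rw [hft', hf₀t]
end
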